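/- Let v₁ = (1/3)(1, i, −1/√2, i/√2), v₂ = (1/3)(1, −i, 1/√2, i/√2), v₃ = (1/3)(1, 0, 0, −i√2) in ℂ⁴, and for t, s ∈ ℝ let f(t,s) = ( (2cos s + e^{−it})/3 , −(2/3) sin s , −(√2 i/3) sin s , (√2 i/3)(cos s − e^{−it}) ) ∈ ℂ⁴ (this is the Family 2 immersion with ν = 1/√2). Then for all t, s ∈ ℝ: e^{it/3}·f(t,s) = e^{i(t/3 + s)}·v₁ + e^{i(t/3 − s)}·v₂ + e^{−2it/3}·v₃. -/

import Mathlib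

open Complex

/-- `ℂ⁴`. -/
abbrev C4 := EuclideanSpace ℂ (Fin 4)

/-- `v₁ = (1/3)(1, i, −1/√2, i/√2)`. -/
noncomputable def v₁ : C4 :=
  WithLp.toLp 2 ((1 / 3 : ℂ) • ![1, I, -(1 / (Real.sqrt 2 : ℂ)), I / (Real.sqrt 2 : ℂ)])

/-- `v₂ = (1/3)(1, −i, 1/√2, i/√2)`. -/
noncomputable def v₂ : C4 :=
  WithLp.toLp 2 ((1 / 3 : ℂ) • ![1, -I, 1 / (Real.sqrt 2 : ℂ), I / (Real.sqrt 2 : ℂ)])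

/-- `v₃ = (1/3)(1, 0, 0, −i√2)`. -/
noncomputable def v₃ : C4 :=
  WithLp.toLp 2 ((1 / 3 : ℂ) • ![1, 0, 0, -(I * (Real.sqrt 2 : ℂ))])

/-- The Family 2 immersion with `ν = 1/√2`:
`f(t,s) = ((2 cos s + e^{-it})/3, -(2/3) sin s, -(√2 i/3) sin s, (√2 i/3)(cos s - e^{-it}))`. -/
noncomputable def fam2 (t s : ℝ) : C4 :=
  WithLp.toLp 2 (![(2 * (Real.cos s : ℂ) + Complex.exp (-(I * t))) / 3,
    -((2 / 3 : ℂ) * (Real.sin s : ℂ)),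
    -((Real.sqrt 2 : ℂ) * I / 3 * (Real.sin s : ℂ)),
    (Real.sqrt 2 : ℂ) * I / 3 * ((Real.cos s : ℂ) - Complex.exp (-(I * t)))])

/-- For all `t, s ∈ ℝ`,
`e^{it/3} • f(t,s) = e^{i(t/3+s)} • v₁ + e^{i(t/3−s)} • v₂ + e^{−2it/3} • v₃`. -/
theorem stmt_13 (t s : ℝ) :
    Complex.exp (I * (t / 3)) • fam2 t s =
      Complex.exp (I * (t / 3 + s)) • v₁ + Complex.exp (I * (t / 3 - s)) • v₂
        + Complex.exp (-(I * (2 * t / 3))) • v₃ := by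
  have h1 : Complex.exp (I * (t / 3 + s)) = Complex.exp (I * (t/3)) * Complex.exp (I * s) := by
    rw [← Complex.exp_add]; ring_nf
  have h2 : Complex.exp (I * (t / 3 - s)) = Complex.exp (I * (t/3)) * Complex.exp (-(I * s)) := by
    rw [← Complex.exp_add]; ring_nf
  have h3 : Complex.exp (-(I * (2 * t / 3))) = Complex.exp (I * (t/3)) * Complex.exp (-(I * t)) := by
    rw [← Complex.exp_add]; ring_nf
  have hc : (Real.cos s : ℂ) = (Complex.exp (I * s) + Complex.exp (-(I * s))) / 2 := by
    rw [Complex.ofReal_cos, Complex.cos]; ring_nf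
  have hs : (Real.sin s : ℂ) = (Complex.exp (I * s) - Complex.exp (-(I * s))) * I / (-2) := by
    rw [Complex.ofReal_sin, Complex.sin]; ring_nf
  have hne : ((Real.sqrt 2 : ℝ) : ℂ) ≠ 0 := by
    norm_cast; positivity
  have hsq : ((Real.sqrt 2 : ℝ) : ℂ) * ((Real.sqrt 2 : ℝ) : ℂ) = 2 := by
    norm_cast; exact Real.mul_self_sqrt (by norm_num)
  have hinv : ((Real.sqrt 2 : ℝ) : ℂ)⁻¹ = ((Real.sqrt 2 : ℝ) : ℂ) / 2 := by
    rw [inv_eq_one_div, div_eq_div_iff hne two_ne_zero]; linear_combination -hsq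
  have hdiv : I / ((Real.sqrt 2 : ℝ) : ℂ) = I * ((Real.sqrt 2 : ℝ) : ℂ) / 2 := by
    rw [div_eq_div_iff hne two_ne_zero]; linear_combination -I * hsq
  ext i
  fin_cases i <;>
    simp [fam2, v₁, v₂, v₃, h1, h2, h3, hc, hs, hinv, hdiv, Matrix.cons_val_zero, Matrix.cons_val_one]
  · ring
  · ring
  · linear_combination ((Complex.exp (I * (↑t/3)) * ((Real.sqrt 2 : ℝ):ℂ) *
      (Complex.exp (I * ↑s) - Complex.exp (-(I * ↑s))) / 6)) * Complex.I_mul_I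
  · ring
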